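/- If k is even, the odd girth of the enhanced hypercube Q_{n,k} (2 ≤ k ≤ n) equals k + 1. -/

import Mathlib

open SimpleGraph

/-- The `n`-dimensional hypercube: vertices are binary strings of length `n`
(indexed so that bit `i+1` of the paper is index `i`), adjacent iff they
differ in exactly one bit. -/
def hypercube (n : ℕ) : SimpleGraph (Fin n → Bool) where
  Adj u v := ∃! i, u i ≠ v i
  symm := ⟨by
    rintro u v ⟨i, hi, hu⟩
    exact ⟨i, hi.symm, fun j hj => hu j hj.symm⟩⟩
  loopless := ⟨by
    rintro u ⟨i, hi, -⟩
    exact hi rfl⟩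

/-- Skip relation: `u` and `v` differ exactly in the last `k` bits
(indices `0, …, k-1`). -/
def skipRel (n k : ℕ) (u v : Fin n → Bool) : Prop :=
  u ≠ v ∧ ∀ i : Fin n, (i.val < k → u i ≠ v i) ∧ (k ≤ i.val → u i = v i)

/-- The enhanced hypercube `Q_{n,k}`: hypercube edges together with skip edges. -/
def enhanced (n k : ℕ) : SimpleGraph (Fin n → Bool) where
  Adj u v := (hypercube n).Adj u v ∨ skipRel n k u v
  symm := ⟨by
    rintro u v (h | ⟨hne, h⟩)
    · exact Or.inl h.symm
    · exact Or.inr ⟨hne.symm, fun i =>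
        ⟨fun hi => ((h i).1 hi).symm, fun hi => ((h i).2 hi).symm⟩⟩⟩
  loopless := ⟨by
    rintro u (h | ⟨hne, -⟩)
    · exact h.ne rfl
    · exact hne rfl⟩

/-- The folded hypercube `FQ_n`: hypercube edges together with complementary edges. -/
def folded (n : ℕ) : SimpleGraph (Fin n → Bool) where
  Adj u v := (hypercube n).Adj u v ∨ (u ≠ v ∧ ∀ i, u i ≠ v i)
  symm := ⟨by
    rintro u v (h | ⟨hne, h⟩)
    · exact Or.inl h.symm
    · exact Or.inr ⟨hne.symm, fun i => (h i).symm⟩⟩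
  loopless := ⟨by
    rintro u (h | ⟨hne, -⟩)
    · exact h.ne rfl
    · exact hne rfl⟩

/-- The Cartesian product `K₂ × G`: two copies of `G` joined by crossing edges. -/
def K2Prod {V : Type*} (G : SimpleGraph V) : SimpleGraph (Bool × V) :=
  (completeGraph Bool) □ G

/-- The edge `e` lies on a cycle of length `l` in `G`. -/
def EdgeOnCycle {V : Type*} (G : SimpleGraph V) (e : Sym2 V) (l : ℕ) : Prop :=
  ∃ (v : V) (c : G.Walk v v), c.IsCycle ∧ c.length = l ∧ e ∈ c.edges

/-!
Along a closed walk every coordinate is flipped an even number of times. Let `s` be the number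
of skip edges and `h i` the number of hypercube edges flipping coordinate `i`; then `s + h i` is
even for `i < k` and `h i` is even for `i ≥ k`, while the length is `s + ∑ i, h i`. If `s` were
even the length would be even, so an odd closed walk has `s` odd, hence `h i ≥ 1` for each of
the `k` coordinates `i < k`, and its length is at least `1 + k`. The bound is attained by
the hypercube path `0 → e₀ → e₀ + e₁ → ⋯ → e₀ + ⋯ + e_{k-1}` closed up by one skip edge.
-/

theorem List.sum_countP_eq_length {α ι : Type*} [Fintype ι] (p : ι → α → Bool)
    (l : List α) (h : ∀ a ∈ l, ∃! i, p i a) : ∑ i, l.countP (p i) = l.length := by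
  induction l with
  | nil => simp
  | cons a t ih =>
    obtain ⟨⟨j, hj, hj_unique⟩, ht⟩ := List.forall_mem_cons.mp h
    have hsingle : ∑ i, (if p i a then 1 else 0) = 1 := by
      rw [Finset.sum_eq_single j (fun i _ hi => by simpa using mt (hj_unique i) hi) (by simp)]
      simp [hj]
    simp only [List.countP_cons, Finset.sum_add_distrib, hsingle, ih ht, List.length_cons]

namespace SimpleGraph.Walk

variable {ι : Type*} {G : SimpleGraph (ι → Bool)}

theorem even_countP_darts_ne_iff {u v : ι → Bool} (p : G.Walk u v) (i : ι) :
    Even (p.darts.countP fun d => d.fst i ≠ d.snd i) ↔ u i = v i := by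
  induction p with
  | nil => simp
  | @cons a b c _ q ih =>
    rw [Walk.darts_cons, List.countP_cons, Nat.even_add, ih]
    cases ha : a i <;> cases hb : b i <;> simp [ha, hb]

end SimpleGraph.Walk

namespace Enhanced

variable {n k : ℕ}

instance : DecidableRel (skipRel n k) := fun _ _ => by unfold skipRel; infer_instance

theorem countP_darts_ne_eq (l : List (enhanced n k).Dart) (i : Fin n) :
    (l.countP fun d => d.fst i ≠ d.snd i) =
      (if i.val < k then (l.filter fun d => skipRel n k d.fst d.snd).length else 0) +
        (l.filter fun d => ¬skipRel n k d.fst d.snd).countP fun d => d.fst i ≠ d.snd i := by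
  rw [l.countP_eq_countP_filter_add _ fun d => skipRel n k d.fst d.snd]
  congr 1
  · split_ifs with hi
    · refine List.countP_eq_length.mpr fun d hd => ?_
      have hs : skipRel n k d.fst d.snd := by simpa using List.of_mem_filter hd
      simpa using (hs.2 i).1 hi
    · refine List.countP_eq_zero.mpr fun d hd => ?_
      have hs : skipRel n k d.fst d.snd := by simpa using List.of_mem_filter hd
      simpa using (hs.2 i).2 (by omega)
  · simp

theorem sum_countP_darts_ne_eq_length (l : List (enhanced n k).Dart) :
    ∑ i, ((l.filter fun d => ¬skipRel n k d.fst d.snd).countP fun d => d.fst i ≠ d.snd i) =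
      (l.filter fun d => ¬skipRel n k d.fst d.snd).length :=
  List.sum_countP_eq_length _ _ fun d hd => by
    have hcube : ∃! i, d.fst i ≠ d.snd i :=
      d.adj.resolve_right (by simpa using List.of_mem_filter hd)
    simpa using hcube

theorem add_one_le_length_of_odd (h2 : k ≤ n) {u : Fin n → Bool} (c : (enhanced n k).Walk u u)
    (hodd : Odd c.length) : k + 1 ≤ c.length := by
  set S := c.darts.filter fun d => skipRel n k d.fst d.snd
  set H := c.darts.filter fun d => ¬skipRel n k d.fst d.snd
  set flips : Fin n → ℕ := fun i => H.countP fun d => d.fst i ≠ d.snd i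
  have hlen : c.length = S.length + ∑ i, flips i := by
    rw [sum_countP_darts_ne_eq_length, ← c.length_darts,
      c.darts.length_eq_countP_add_countP fun d => skipRel n k d.fst d.snd,
      List.countP_eq_length_filter, List.countP_eq_length_filter]
    simp [S]
  have heven (i : Fin n) : Even ((if i.val < k then S.length else 0) + flips i) := by
    rw [← countP_darts_ne_eq]
    exact (c.even_countP_darts_ne_iff i).mpr rfl
  have hS : Odd S.length := by
    by_contra hS
    rw [Nat.not_odd_iff_even] at hS
    have hflips (i : Fin n) : Even (flips i) := by
      have := heven i
      split_ifs at this
      · exact (Nat.even_add.mp this).mp hS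
      · simpa using this
    exact Nat.not_even_iff_odd.mpr hodd (hlen ▸ hS.add (Finset.even_sum _ fun i _ => hflips i))
  have hpos (i : Fin n) (hi : i.val < k) : 1 ≤ flips i := by
    have hparity := heven i
    rw [if_pos hi, Nat.even_add] at hparity
    exact (Nat.not_even_iff_odd.mp (mt hparity.mpr (Nat.not_even_iff_odd.mpr hS))).pos
  have hk : k ≤ ∑ i, flips i :=
    calc k = (Finset.univ.filter fun i : Fin n => i.val < k).card := by
          simp [Fin.card_filter_val_lt, h2]
      _ ≤ ∑ i ∈ Finset.univ.filter fun i : Fin n => i.val < k, flips i := by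
          simpa using Finset.card_nsmul_le_sum _ _ 1 fun i hi => hpos i (by simpa using hi)
      _ ≤ ∑ i, flips i := Finset.sum_le_sum_of_subset (Finset.filter_subset _ _)
  have := hS.pos
  omega

def lowBits (n j : ℕ) : Fin n → Bool := fun i => i.val < j

theorem lowBits_injOn : Set.InjOn (lowBits n) (Set.Iic n) := by
  intro a ha b hb hab
  by_contra hne
  wlog hlt : a < b generalizing a b
  · exact this hb ha hab.symm (Ne.symm hne) (by omega)
  have := congrFun hab ⟨a, by simp at hb; omega⟩
  simp [lowBits, hlt] at this

theorem hypercube_adj_lowBits_succ {j : ℕ} (hj : j < n) :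
    (hypercube n).Adj (lowBits n j) (lowBits n (j + 1)) :=
  ⟨⟨j, hj⟩, by simp [lowBits], fun i hi => Fin.ext <| show i.val = j by
    by_contra hne
    exact hi (by simp only [lowBits, decide_eq_decide]; omega)⟩

def lowBitsPath (n : ℕ) : (j : ℕ) → j ≤ n → (hypercube n).Walk (lowBits n 0) (lowBits n j)
  | 0, _ => .nil
  | j + 1, h => (lowBitsPath n j (by omega)).concat (hypercube_adj_lowBits_succ h)

theorem length_lowBitsPath : ∀ (j : ℕ) (h : j ≤ n), (lowBitsPath n j h).length = j
  | 0, _ => rfl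
  | j + 1, h => by simp [lowBitsPath, length_lowBitsPath j]

theorem support_lowBitsPath :
    ∀ (j : ℕ) (h : j ≤ n), (lowBitsPath n j h).support = (List.range (j + 1)).map (lowBits n)
  | 0, _ => rfl
  | j + 1, h => by
    simp [lowBitsPath, support_lowBitsPath j, List.range_succ (n := j + 1)]

theorem isPath_lowBitsPath (j : ℕ) (h : j ≤ n) : (lowBitsPath n j h).IsPath := by
  rw [Walk.isPath_def, support_lowBitsPath]
  refine List.nodup_range.map_on fun a ha b hb hab => lowBits_injOn ?_ ?_ hab <;>
    simp at ha hb ⊢ <;> omega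

theorem skipRel_lowBits_zero (h1 : 0 < k) (h2 : k ≤ n) :
    skipRel n k (lowBits n 0) (lowBits n k) := by
  refine ⟨fun h => ?_, fun i => ⟨fun hi => by simp [lowBits, hi], fun hi => ?_⟩⟩
  · have := congrFun h ⟨0, by omega⟩
    simp [lowBits, h1] at this
  · simp [lowBits]
    omega

theorem not_hypercube_adj_lowBits_zero (h1 : 2 ≤ k) (h2 : k ≤ n) :
    ¬(hypercube n).Adj (lowBits n 0) (lowBits n k) := by
  rintro ⟨i, -, hi⟩
  have h0 := hi ⟨0, by omega⟩ (by simp [lowBits]; omega)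
  have h1 := hi ⟨1, by omega⟩ (by simp [lowBits]; omega)
  simp [← h1, Fin.ext_iff] at h0

theorem exists_isCycle_length_eq (h1 : 2 ≤ k) (h2 : k ≤ n) :
    ∃ (v : Fin n → Bool) (c : (enhanced n k).Walk v v), c.IsCycle ∧ c.length = k + 1 := by
  have hle : hypercube n ≤ enhanced n k := fun _ _ => Or.inl
  let q := ((lowBitsPath n k h2).mapLe hle).reverse
  have hq : s(lowBits n 0, lowBits n k) ∉ q.edges := fun he => by
    simp only [q, Walk.edges_reverse, List.mem_reverse, Walk.edges_mapLe_eq_edges] at he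
    exact not_hypercube_adj_lowBits_zero h1 h2 (Walk.adj_of_mem_edges _ he)
  have hadj : (enhanced n k).Adj (lowBits n 0) (lowBits n k) :=
    Or.inr (skipRel_lowBits_zero (by omega) h2)
  refine ⟨_, .cons hadj q, (Walk.cons_isCycle_iff q hadj).mpr ⟨?_, hq⟩, ?_⟩
  · exact ((isPath_lowBitsPath k h2).mapLe hle).reverse
  · simp [q, length_lowBitsPath]

end Enhanced

theorem stmt16_general (n k : ℕ) (h1 : 2 ≤ k) (h2 : k ≤ n) :
    (∃ (v : Fin n → Bool) (c : (enhanced n k).Walk v v),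
      c.IsCycle ∧ c.length = k + 1) ∧
    (∀ (v : Fin n → Bool) (c : (enhanced n k).Walk v v), c.IsCycle → Odd c.length →
      k + 1 ≤ c.length) :=
  ⟨Enhanced.exists_isCycle_length_eq h1 h2,
    fun _ c _ hodd => Enhanced.add_one_le_length_of_odd h2 c hodd⟩

/-- If `k` is even, the odd girth of `Q_{n,k}` (`2 ≤ k ≤ n`) equals `k + 1`. -/
theorem stmt16 (n k : ℕ) (hk : Even k) (h1 : 2 ≤ k) (h2 : k ≤ n) :
    (∃ (v : Fin n → Bool) (c : (enhanced n k).Walk v v),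
      c.IsCycle ∧ c.length = k + 1) ∧
    (∀ (v : Fin n → Bool) (c : (enhanced n k).Walk v v), c.IsCycle → Odd c.length →
      k + 1 ≤ c.length) :=
  stmt16_general n k h1 h2
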